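/- arXiv:1309.2922 — 2 statements merged into one kernel-verified Lean document; each statement's English description precedes it below -/
import Mathlib

section
/- Let u : ℕ → ℝ be strictly decreasing with u(n) > 0 for n ≤ n_T and u(n) ≤ 0 for n > n_T, where n_T ≥ 1. Let N, M, L be positive integers with L < M. Consider an allocation D : Fin N → Fin M → Bool with row sums c_j = #{i | D i j = true}, subject to ∑_j (D i j) ≤ L for each i, such that no customer can strictly increase ∑_{j : D i j} u(c_j) by unilaterally changing his row (keeping the budget constraint). If n_T ≥ ⌈N·L/M⌉, then every equilibrium allocation with ∑_{i,j} D i j = N·L satisfies: for all j, c_j ∈ {⌊N·L/M⌋, ⌈N·L/M⌉}. -/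
open Finset

/-- Theorem 4, Case 2: in the budget-constrained homogeneous
Indian Buffet Game, if `n_T ≥ ⌈N·L/M⌉` (equivalently `N·L ≤ n_T·M`), then any
Nash equilibrium allocation with total demand `N·L` gives every dish a
congestion equal to `⌊N·L/M⌋` or `⌈N·L/M⌉`. -/
theorem stmt2 (u : ℕ → ℝ) (hu : StrictAnti u) (nT : ℕ) (hnT : 1 ≤ nT)
    (hpos : ∀ n, 1 ≤ n → n ≤ nT → 0 < u n) (hneg : ∀ n, nT < n → u n ≤ 0)
    (N M L : ℕ) (hN : 0 < N) (hM : 0 < M) (hL : 0 < L) (hLM : L < M)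
    (D : Fin N → Fin M → Bool)
    (hbudget : ∀ i, (Finset.univ.filter (fun j => D i j = true)).card ≤ L)
    (hfull : ∑ i, (Finset.univ.filter (fun j => D i j = true)).card = N * L)
    (hnash : ∀ i : Fin N, ∀ d' : Fin M → Bool,
      (Finset.univ.filter (fun j => d' j = true)).card ≤ L →
      (∑ j ∈ Finset.univ.filter (fun j => d' j = true),
          u ((Finset.univ.filter
            (fun k => Function.update D i d' k j = true)).card))
        ≤ ∑ j ∈ Finset.univ.filter (fun j => D i j = true),
            u ((Finset.univ.filter (fun k => D k j = true)).card))
    (hceil : N * L ≤ nT * M) :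
    ∀ j : Fin M,
      (Finset.univ.filter (fun i => D i j = true)).card = N * L / M ∨
      (Finset.univ.filter (fun i => D i j = true)).card = (N * L + M - 1) / M := by
  classical
  -- congestion of dish j
  have hswap : ∑ j : Fin M, (Finset.univ.filter (fun i => D i j = true)).card = N * L := by
    rw [← hfull]
    simp only [Finset.card_filter]
    exact Finset.sum_comm
  -- the gap between any two congestions is at most 1
  have hgap : ∀ j k : Fin M,
      (Finset.univ.filter (fun i => D i j = true)).card ≤
      (Finset.univ.filter (fun i => D i k = true)).card + 1 := by
    intro j k
    by_contra hcon
    push_neg at hcon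
    have hlt : (Finset.univ.filter (fun i => D i k = true)).card + 1 <
        (Finset.univ.filter (fun i => D i j = true)).card := hcon
    -- find a customer taking j but not k
    obtain ⟨i, hij, hik⟩ : ∃ i : Fin N, D i j = true ∧ D i k = false := by
      by_contra h
      push_neg at h
      have hsub : (Finset.univ.filter (fun i => D i j = true)) ⊆
          (Finset.univ.filter (fun i => D i k = true)) := by
        intro i hi
        simp only [mem_filter, mem_univ, true_and] at hi ⊢
        have := h i hi
        simpa using this
      have := Finset.card_le_card hsub
      omega
    have hjk : j ≠ k := by
      rintro rfl
      simp [hij] at hik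
    -- the deviation
    set d' : Fin M → Bool := fun m => if m = k then true else if m = j then false else D i m
      with hd'
    set S : Finset (Fin M) := Finset.univ.filter (fun m => D i m = true) with hSdef
    have hjS : j ∈ S := by simp [hSdef, hij]
    have hkS : k ∉ S.erase j := by
      simp [hSdef, hik]
    have hS' : Finset.univ.filter (fun m => d' m = true) = insert k (S.erase j) := by
      ext m
      simp only [mem_filter, mem_univ, true_and, mem_insert, mem_erase, hd', hSdef]
      by_cases hmk : m = k
      · simp [hmk]
      · by_cases hmj : m = j
        · simp [hmk, hmj]
        · simp [hmk, hmj]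
    have hScard : 1 ≤ S.card := Finset.card_pos.mpr ⟨j, hjS⟩
    have hcard' : (Finset.univ.filter (fun m => d' m = true)).card = S.card := by
      rw [hS', Finset.card_insert_of_notMem hkS, Finset.card_erase_of_mem hjS]
      omega
    have hbud' : (Finset.univ.filter (fun m => d' m = true)).card ≤ L := by
      rw [hcard']; exact hbudget i
    -- new congestions
    have hup : ∀ m : Fin M, m ≠ j → m ≠ k →
        (Finset.univ.filter (fun i' => Function.update D i d' i' m = true)) =
        Finset.univ.filter (fun i' => D i' m = true) := by
      intro m hmj hmk
      ext i'
      simp only [mem_filter, mem_univ, true_and]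
      by_cases hii : i' = i
      · subst hii
        rw [Function.update_self]
        simp [hd', hmk, hmj]
      · rw [Function.update_of_ne hii]
    have hinotk : i ∉ Finset.univ.filter (fun i' => D i' k = true) := by
      simp [hik]
    have hupk : (Finset.univ.filter (fun i' => Function.update D i d' i' k = true)) =
        insert i (Finset.univ.filter (fun i' => D i' k = true)) := by
      ext i'
      simp only [mem_filter, mem_univ, true_and, mem_insert]
      by_cases hii : i' = i
      · subst hii
        rw [Function.update_self]
        simp [hd']
      · rw [Function.update_of_ne hii]
        simp [hii]
    have hck : (Finset.univ.filter (fun i' => Function.update D i d' i' k = true)).card =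
        (Finset.univ.filter (fun i' => D i' k = true)).card + 1 := by
      rw [hupk, Finset.card_insert_of_notMem hinotk]
    -- deviation utility
    have hsum' : (∑ m ∈ Finset.univ.filter (fun m => d' m = true),
        u ((Finset.univ.filter (fun i' => Function.update D i d' i' m = true)).card)) =
        u ((Finset.univ.filter (fun i' => D i' k = true)).card + 1) +
        ∑ m ∈ S.erase j, u ((Finset.univ.filter (fun i' => D i' m = true)).card) := by
      rw [hS', Finset.sum_insert hkS]
      congr 1
      · rw [hck]
      · apply Finset.sum_congr rfl
        intro m hm
        have hmj : m ≠ j := (Finset.mem_erase.mp hm).1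
        have hmk : m ≠ k := by
          rintro rfl
          exact hkS hm
        rw [hup m hmj hmk]
    have hold : (∑ m ∈ S, u ((Finset.univ.filter (fun i' => D i' m = true)).card)) =
        u ((Finset.univ.filter (fun i' => D i' j = true)).card) +
        ∑ m ∈ S.erase j, u ((Finset.univ.filter (fun i' => D i' m = true)).card) :=
      (Finset.add_sum_erase S _ hjS).symm
    have hnashi := hnash i d' hbud'
    rw [hsum'] at hnashi
    rw [show (Finset.univ.filter (fun m => D i m = true)) = S from rfl] at hnashi
    rw [hold] at hnashi
    have hlt2 : u ((Finset.univ.filter (fun i' => D i' j = true)).card) <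
        u ((Finset.univ.filter (fun i' => D i' k = true)).card + 1) := hu (by omega)
    linarith
  -- arithmetic conclusion
  intro j
  set q := N * L / M with hq
  set C := (N * L + M - 1) / M with hC
  have f1 : q * M ≤ N * L := Nat.div_mul_le_self _ _
  have f2 : N * L ≤ C * M := by
    have h1 := Nat.div_add_mod (N * L + M - 1) M
    rw [← hC] at h1
    have h2 : (N * L + M - 1) % M < M := Nat.mod_lt _ hM
    have h3 : M * C = C * M := Nat.mul_comm _ _
    omega
  have f3 : C ≤ q + 1 := by
    have h1 : N * L + M - 1 ≤ N * L + M := by omega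
    calc C ≤ (N * L + M) / M := Nat.div_le_div_right h1
      _ = q + 1 := Nat.add_div_right _ hM
  have f4 : q ≤ C := by
    apply Nat.div_le_div_right
    omega
  -- bounds on the sum via the erase decomposition
  have hsplit : (Finset.univ.filter (fun i => D i j = true)).card +
      ∑ m ∈ (Finset.univ : Finset (Fin M)).erase j,
        (Finset.univ.filter (fun i => D i m = true)).card = N * L := by
    rw [← hswap]
    exact Finset.add_sum_erase Finset.univ (fun m => (Finset.univ.filter (fun i => D i m = true)).card) (mem_univ j)
  have hcarderase : ((Finset.univ : Finset (Fin M)).erase j).card = M - 1 := by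
    rw [Finset.card_erase_of_mem (mem_univ j)]
    simp
  -- lower bound: q ≤ c j
  have hlow : q ≤ (Finset.univ.filter (fun i => D i j = true)).card := by
    by_contra h
    push_neg at h
    have hub : ∑ m ∈ (Finset.univ : Finset (Fin M)).erase j,
        (Finset.univ.filter (fun i => D i m = true)).card ≤ (M - 1) * q := by
      calc ∑ m ∈ (Finset.univ : Finset (Fin M)).erase j,
          (Finset.univ.filter (fun i => D i m = true)).card
          ≤ ∑ _m ∈ (Finset.univ : Finset (Fin M)).erase j, q := by
            apply Finset.sum_le_sum
            intro m _
            have := hgap m j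
            omega
        _ = (M - 1) * q := by rw [Finset.sum_const, hcarderase, smul_eq_mul]
    have hMq : (M - 1) * q + q = M * q := by
      rcases Nat.exists_eq_succ_of_ne_zero (Nat.pos_iff_ne_zero.mp hM) with ⟨m, rfl⟩
      simp [Nat.succ_sub_one, Nat.succ_mul]
    have hMq2 : M * q = q * M := Nat.mul_comm _ _
    omega
  -- upper bound: c j ≤ C
  have hhigh : (Finset.univ.filter (fun i => D i j = true)).card ≤ C := by
    by_contra h
    push_neg at h
    have hlb : (M - 1) * C ≤ ∑ m ∈ (Finset.univ : Finset (Fin M)).erase j,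
        (Finset.univ.filter (fun i => D i m = true)).card := by
      calc (M - 1) * C = ∑ _m ∈ (Finset.univ : Finset (Fin M)).erase j, C := by
            rw [Finset.sum_const, hcarderase, smul_eq_mul]
        _ ≤ ∑ m ∈ (Finset.univ : Finset (Fin M)).erase j,
            (Finset.univ.filter (fun i => D i m = true)).card := by
            apply Finset.sum_le_sum
            intro m _
            have := hgap j m
            omega
    have hMC : (M - 1) * C + C = M * C := by
      rcases Nat.exists_eq_succ_of_ne_zero (Nat.pos_iff_ne_zero.mp hM) with ⟨m, rfl⟩
      simp [Nat.succ_sub_one, Nat.succ_mul]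
    have hMC2 : M * C = C * M := Nat.mul_comm _ _
    omega
  omega
end

section
/- Let Q be a finite set and f : Q → ℝ a positive probability mass function. Consider a sequence of positive probability mass functions λ_t : Q → ℝ such that ∑_{s ∈ Q} f(s)·log(f(s)/λ_t(s)) → 0 as t → ∞. Then λ_t(s) → f(s) for every s ∈ Q. -/
open Finset Filter

/-- Key elementary inequality: `(√a - √b)^2 ≤ a * log (a/b) - a + b` for positive `a, b`. -/
lemma sq_sqrt_sub_le (a b : ℝ) (ha : 0 < a) (hb : 0 < b) :
    (Real.sqrt a - Real.sqrt b) ^ 2 ≤ a * Real.log (a / b) - a + b := by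
  have hsa := Real.sqrt_pos.mpr ha
  have hsb := Real.sqrt_pos.mpr hb
  have hlog : Real.log (Real.sqrt b / Real.sqrt a) ≤ Real.sqrt b / Real.sqrt a - 1 :=
    Real.log_le_sub_one_of_pos (div_pos hsb hsa)
  have hab : Real.log (a / b) = -2 * Real.log (Real.sqrt b / Real.sqrt a) := by
    rw [Real.log_div hsb.ne' hsa.ne', Real.log_sqrt ha.le, Real.log_sqrt hb.le,
      Real.log_div ha.ne' hb.ne']
    ring
  have hmain : 2 * a - 2 * Real.sqrt a * Real.sqrt b ≤ a * Real.log (a / b) := by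
    rw [hab]
    have h1 : a * (-2 * (Real.sqrt b / Real.sqrt a - 1)) ≤
        a * (-2 * Real.log (Real.sqrt b / Real.sqrt a)) := by
      apply mul_le_mul_of_nonneg_left _ ha.le
      nlinarith [hlog]
    calc 2 * a - 2 * Real.sqrt a * Real.sqrt b
        = a * (-2 * (Real.sqrt b / Real.sqrt a - 1)) := by
          field_simp
          nlinarith [Real.sq_sqrt ha.le, Real.sq_sqrt hb.le]
      _ ≤ _ := h1
  have hsq : (Real.sqrt a - Real.sqrt b) ^ 2 = a - 2 * Real.sqrt a * Real.sqrt b + b := by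
    have := Real.sq_sqrt ha.le
    have := Real.sq_sqrt hb.le
    ring_nf
    nlinarith [Real.sq_sqrt ha.le, Real.sq_sqrt hb.le]
  nlinarith [hmain]

/-- Each summand of the "corrected" KL is nonnegative. -/
lemma term_nonneg (a b : ℝ) (ha : 0 < a) (hb : 0 < b) :
    0 ≤ a * Real.log (a / b) - a + b :=
  le_trans (sq_nonneg _) (sq_sqrt_sub_le a b ha hb)

/-- if the KL divergence from the positive pmf `f` to the positive
pmfs `lam t` tends to `0`, then `lam t s → f s` for every `s`. -/
theorem stmt11 (Q : Type*) [Fintype Q] [Nonempty Q] (f : Q → ℝ)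
    (hf : ∀ s, 0 < f s) (hf1 : ∑ s, f s = 1)
    (lam : ℕ → Q → ℝ) (hlam : ∀ t s, 0 < lam t s) (hlam1 : ∀ t, ∑ s, lam t s = 1)
    (hKL : Tendsto (fun t => ∑ s, f s * Real.log (f s / lam t s)) atTop (nhds 0)) :
    ∀ s, Tendsto (fun t => lam t s) atTop (nhds (f s)) := by
  intro s
  -- g t s' := corrected KL summand
  set g : ℕ → Q → ℝ := fun t s' => f s' * Real.log (f s' / lam t s') - f s' + lam t s' with hg
  have hsum : ∀ t, ∑ s', g t s' = ∑ s', f s' * Real.log (f s' / lam t s') := by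
    intro t
    simp only [hg]
    rw [Finset.sum_add_distrib, Finset.sum_sub_distrib, hf1, hlam1]
    ring
  -- each g t s → 0 by squeeze
  have hgs : Tendsto (fun t => g t s) atTop (nhds 0) := by
    apply tendsto_of_tendsto_of_tendsto_of_le_of_le tendsto_const_nhds
      (hKL.congr fun t => (hsum t).symm)
    · intro t
      exact term_nonneg _ _ (hf s) (hlam t s)
    · intro t
      exact Finset.single_le_sum (fun s' _ => term_nonneg _ _ (hf s') (hlam t s'))
        (Finset.mem_univ s)
  -- hence (√(f s) - √(lam t s))^2 → 0
  have hsq : Tendsto (fun t => (Real.sqrt (f s) - Real.sqrt (lam t s)) ^ 2) atTop (nhds 0) := by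
    apply tendsto_of_tendsto_of_tendsto_of_le_of_le tendsto_const_nhds hgs
    · intro t; exact sq_nonneg _
    · intro t; exact sq_sqrt_sub_le _ _ (hf s) (hlam t s)
  -- hence √(lam t s) → √(f s)
  have hsqrt : Tendsto (fun t => Real.sqrt (lam t s)) atTop (nhds (Real.sqrt (f s))) := by
    have habs : Tendsto (fun t => |Real.sqrt (f s) - Real.sqrt (lam t s)|) atTop (nhds 0) := by
      have := hsq.sqrt
      simpa [Real.sqrt_sq_eq_abs] using this
    have hdiff : Tendsto (fun t => Real.sqrt (f s) - Real.sqrt (lam t s)) atTop (nhds 0) :=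
      (tendsto_zero_iff_abs_tendsto_zero _).mpr habs
    have := (tendsto_const_nhds (x := Real.sqrt (f s)) (f := atTop)).sub hdiff
    simpa using this
  -- square back
  have : Tendsto (fun t => Real.sqrt (lam t s) ^ 2) atTop (nhds (Real.sqrt (f s) ^ 2)) :=
    hsqrt.pow 2
  rw [Real.sq_sqrt (hf s).le] at this
  exact this.congr fun t => Real.sq_sqrt (hlam t s).le
end
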